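/- The entanglement of purification admits the following channel reformulation: for every density matrix ρ on H_A ⊗ H_B with eigendecomposition ρ = Σ_i λ_i |ψ_i⟩⟨ψ_i|, let |ψ_s⟩ = Σ_i √λ_i |ψ_i⟩_{AB} ⊗ |0⟩_{A'} |i⟩_{B'} be the standard purification and μ_{BB'}(ρ) = Tr_{AA'} |ψ_s⟩⟨ψ_s|. Then E_p(ρ) = inf over TCP maps Λ_{B'} acting on the B' system of S((I_B ⊗ Λ_{B'})(μ_{BB'}(ρ))). -/

import Mathlib

noncomputable section
open scoped BigOperators Kronecker Matrix ComplexOrder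
open Matrix

namespace QIT

def IsDensity {n : Type*} [Fintype n] [DecidableEq n] (ρ : Matrix n n ℂ) : Prop :=
  ρ.PosSemidef ∧ ρ.trace = 1

noncomputable def vN {n : Type*} [Fintype n] [DecidableEq n] (ρ : Matrix n n ℂ) : ℝ :=
  if h : ρ.IsHermitian then ∑ i, -(h.eigenvalues i * Real.logb 2 (h.eigenvalues i)) else 0

def proj {n : Type*} (ψ : n → ℂ) : Matrix n n ℂ :=
  Matrix.of fun x y => ψ x * (starRingEnd ℂ) (ψ y)

def ptraceL {a b : Type*} [Fintype a] (ρ : Matrix (a × b) (a × b) ℂ) : Matrix b b ℂ :=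
  Matrix.of fun i j => ∑ k, ρ (k, i) (k, j)

def ptraceR {a b : Type*} [Fintype b] (ρ : Matrix (a × b) (a × b) ℂ) : Matrix a a ℂ :=
  Matrix.of fun i j => ∑ k, ρ (i, k) (j, k)

noncomputable def ent {X Y : Type*} [Fintype X] [Fintype Y] [DecidableEq Y]
    (ψ : X × Y → ℂ) : ℝ :=
  vN (ptraceL (proj ψ))

def IsPurification {A B : Type*} [Fintype A] [Fintype B] {dA' dB' : ℕ}
    (ρ : Matrix (A × B) (A × B) ℂ)
    (ψ : (A × Fin dA') × (B × Fin dB') → ℂ) : Prop :=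
  (∑ x, ‖ψ x‖ ^ 2 = 1) ∧
  ∀ a b a' b', ρ (a, b) (a', b') =
    ∑ a2 : Fin dA', ∑ b2 : Fin dB',
      ψ ((a, a2), (b, b2)) * (starRingEnd ℂ) (ψ ((a', a2), (b', b2)))

noncomputable def Ep {A B : Type*} [Fintype A] [Fintype B] [DecidableEq A] [DecidableEq B]
    (ρ : Matrix (A × B) (A × B) ℂ) : ℝ :=
  sInf { e : ℝ | ∃ (dA' dB' : ℕ) (ψ : (A × Fin dA') × (B × Fin dB') → ℂ),
    IsPurification ρ ψ ∧ e = ent ψ }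

noncomputable def Iq {A B : Type*} [Fintype A] [Fintype B] [DecidableEq A] [DecidableEq B]
    (ρ : Matrix (A × B) (A × B) ℂ) : ℝ :=
  vN (ptraceR ρ) + vN (ptraceL ρ) - vN ρ

open Classical in
noncomputable def msqrt {n : Type*} [Fintype n] [DecidableEq n] (M : Matrix n n ℂ) : Matrix n n ℂ :=
  if h : M.PosSemidef then
    (h.1.eigenvectorUnitary : Matrix n n ℂ) *
      diagonal ((↑) ∘ (fun i => Real.sqrt (h.1.eigenvalues i))) *
      (star (h.1.eigenvectorUnitary : Matrix n n ℂ))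
  else 0

noncomputable def fid {n : Type*} [Fintype n] [DecidableEq n] (ρ σ : Matrix n n ℂ) : ℝ :=
  ((msqrt (msqrt ρ * σ * msqrt ρ)).trace).re

noncomputable def bures {n : Type*} [Fintype n] [DecidableEq n] (ρ σ : Matrix n n ℂ) : ℝ :=
  2 * Real.sqrt (1 - fid ρ σ)

noncomputable def traceNorm {n : Type*} [Fintype n] [DecidableEq n] (X : Matrix n n ℂ) : ℝ :=
  ((msqrt (Xᴴ * X)).trace).re

def IsPOVM {n : Type*} [Fintype n] [DecidableEq n] {k : ℕ} (M : Fin k → Matrix n n ℂ) : Prop :=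
  (∀ i, (M i).PosSemidef) ∧ ∑ i, M i = 1

noncomputable def shannon {k : Type*} [Fintype k] (p : k → ℝ) : ℝ :=
  ∑ i, -(p i * Real.logb 2 (p i))

noncomputable def miJoint {k l : Type*} [Fintype k] [Fintype l] (p : k × l → ℝ) : ℝ :=
  shannon (fun i => ∑ j, p (i, j)) + shannon (fun j => ∑ i, p (i, j)) - shannon p

noncomputable def Ic {A B : Type*} [Fintype A] [Fintype B] [DecidableEq A] [DecidableEq B]
    (ρ : Matrix (A × B) (A × B) ℂ) : ℝ :=
  sSup { e : ℝ | ∃ (k l : ℕ) (MA : Fin k → Matrix A A ℂ) (MB : Fin l → Matrix B B ℂ),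
    IsPOVM MA ∧ IsPOVM MB ∧
    e = miJoint (fun ij : Fin k × Fin l => (((MA ij.1 ⊗ₖ MB ij.2) * ρ).trace).re) }

noncomputable def probOf {A B : Type*} [Fintype A] [Fintype B] [DecidableEq A] [DecidableEq B]
    (M : Matrix A A ℂ) (ρ : Matrix (A × B) (A × B) ℂ) : ℝ :=
  (((M ⊗ₖ (1 : Matrix B B ℂ)) * ρ).trace).re

noncomputable def postB {A B : Type*} [Fintype A] [Fintype B] [DecidableEq A] [DecidableEq B]
    (M : Matrix A A ℂ) (ρ : Matrix (A × B) (A × B) ℂ) : Matrix B B ℂ :=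
  ((probOf M ρ : ℂ))⁻¹ • ptraceL ((M ⊗ₖ (1 : Matrix B B ℂ)) * ρ)

noncomputable def CA {A B : Type*} [Fintype A] [Fintype B] [DecidableEq A] [DecidableEq B]
    (ρ : Matrix (A × B) (A × B) ℂ) : ℝ :=
  sSup { c : ℝ | ∃ (k : ℕ) (M : Fin k → Matrix A A ℂ), IsPOVM M ∧
    c = vN (∑ i, (probOf (M i) ρ : ℂ) • postB (M i) ρ)
        - ∑ i, probOf (M i) ρ * vN (postB (M i) ρ) }

noncomputable def pauli : Fin 4 → Matrix (Fin 2) (Fin 2) ℂ :=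
  ![1, !![0, 1; 1, 0], !![0, -Complex.I; Complex.I, 0], !![1, 0; 0, -1]]

noncomputable def bell0 : Fin 2 × Fin 2 → ℂ :=
  fun x => if x.1 = x.2 then ((Real.sqrt 2)⁻¹ : ℝ) else 0

noncomputable def bell (i : Fin 4) : Fin 2 × Fin 2 → ℂ :=
  fun x => ∑ j, pauli i x.2 j * bell0 (x.1, j)

noncomputable def binEnt (x : ℝ) : ℝ :=
  -(x * Real.logb 2 x) - (1 - x) * Real.logb 2 (1 - x)

noncomputable def pauliChannel (p : Fin 4 → ℝ) (X : Matrix (Fin 2) (Fin 2) ℂ) :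
    Matrix (Fin 2) (Fin 2) ℂ :=
  ∑ i, (p i : ℂ) • (pauli i * X * pauli i)

noncomputable def holevoCap (Λ : Matrix (Fin 2) (Fin 2) ℂ → Matrix (Fin 2) (Fin 2) ℂ) : ℝ :=
  sSup { c : ℝ | ∃ (k : ℕ) (q : Fin k → ℝ) (ρs : Fin k → Matrix (Fin 2) (Fin 2) ℂ),
    (∀ i, 0 ≤ q i) ∧ (∑ i, q i = 1) ∧ (∀ i, IsDensity (ρs i)) ∧
    c = vN (∑ i, (q i : ℂ) • Λ (ρs i)) - ∑ i, q i * vN (Λ (ρs i)) }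

def tensPow {A B : Type*} [Fintype A] [Fintype B]
    (ρ : Matrix (A × B) (A × B) ℂ) (n : ℕ) :
    Matrix ((Fin n → A) × (Fin n → B)) ((Fin n → A) × (Fin n → B)) ℂ :=
  Matrix.of fun x y => ∏ t, ρ (x.1 t, x.2 t) (y.1 t, y.2 t)

/-!
The two sets whose infima are compared coincide. A trace-preserving Kraus family `Vᵢ` turns the
standard purification `ψ_s` into the purification `∑ᵢ (1 ⊗ Vᵢ) ψ_s ⊗ |i⟩` of `ρ`, the environment
`i` going to Alice's side, and the `BB'` marginal of that vector is `(I ⊗ Λ)(μ)`. Conversely, a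
purification `ψ` of `ρ` expands along the eigenbasis as `ψ = ∑ⱼ vⱼ ⊗ wⱼ`, where the `wⱼ` are
orthogonal with `‖wⱼ‖² = λⱼ`; the operators `Vₑ = ∑ⱼ |wⱼ(e, ·)⟩⟨j| / √λⱼ` map `ψ_s` to `ψ`, and they
become trace preserving once completed by operators supported on the kernel of `ρ`, which `μ`
does not see.
-/

open ComplexConjugate

section Kraus

variable {ι κ A B C N : Type*}

def krausApply [Fintype ι] [Fintype B] [DecidableEq B] [Fintype N] (V : ι → Matrix C N ℂ)
    (μ : Matrix (B × N) (B × N) ℂ) : Matrix (B × C) (B × C) ℂ :=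
  ∑ i, ((1 : Matrix B B ℂ) ⊗ₖ V i) * μ * ((1 : Matrix B B ℂ) ⊗ₖ V i)ᴴ

lemma krausApply_apply [Fintype ι] [Fintype B] [DecidableEq B] [Fintype N]
    (V : ι → Matrix C N ℂ) (μ : Matrix (B × N) (B × N) ℂ) (b b' : B) (c c' : C) :
    krausApply V μ (b, c) (b', c') =
      ∑ i, ∑ j, ∑ j', V i c j * conj (V i c' j') * μ (b, j) (b', j') := by
  simp only [krausApply, Matrix.sum_apply, Matrix.mul_apply, Matrix.conjTranspose_apply,
    Matrix.kroneckerMap_apply, Matrix.one_apply, Fintype.sum_prod_type,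
    Finset.sum_mul, ite_mul, one_mul, zero_mul, mul_ite, mul_zero, apply_ite (star : ℂ → ℂ),
    star_zero, Finset.sum_ite_irrel, Finset.sum_ite_eq, Finset.sum_const_zero, Finset.mem_univ,
    if_true]
  refine Finset.sum_congr rfl fun i _ => ?_
  rw [Finset.sum_comm]
  exact Finset.sum_congr rfl fun j _ => Finset.sum_congr rfl fun j' _ => by
    rw [Complex.star_def]; ring

lemma krausApply_comp_equiv [Fintype ι] [Fintype κ] [Fintype B] [DecidableEq B] [Fintype N]
    (e : κ ≃ ι) (V : ι → Matrix C N ℂ) (μ : Matrix (B × N) (B × N) ℂ) :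
    krausApply (V ∘ e) μ = krausApply V μ :=
  e.sum_comp fun i => ((1 : Matrix B B ℂ) ⊗ₖ V i) * μ * ((1 : Matrix B B ℂ) ⊗ₖ V i)ᴴ

lemma krausApply_sum_elim [Fintype ι] [Fintype κ] [Fintype B] [DecidableEq B] [Fintype N]
    (V : ι → Matrix C N ℂ) (W : κ → Matrix C N ℂ) (μ : Matrix (B × N) (B × N) ℂ) :
    krausApply (Sum.elim V W) μ = krausApply V μ + krausApply W μ :=
  Fintype.sum_sum_type _

lemma sum_mul_conj_of_kraus [Fintype ι] [Fintype C] [DecidableEq N] {V : ι → Matrix C N ℂ}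
    (hV : ∑ i, (V i)ᴴ * V i = 1) (j j' : N) :
    ∑ i, ∑ c, V i c j * conj (V i c j') = if j = j' then 1 else 0 := by
  have h := congrFun (congrFun hV j') j
  simp only [Matrix.sum_apply, Matrix.mul_apply, Matrix.conjTranspose_apply, Matrix.one_apply,
    Complex.star_def] at h
  simp only [mul_comm (V _ _ j), h, eq_comm]

/-- The Stinespring vector `∑ᵢ ((1 ⊗ Vᵢ) φ) ⊗ |i⟩`, with the environment `ι` on the `A` side. -/
def stinespringVec [Fintype N] (V : ι → Matrix C N ℂ) (φ : A × (B × N) → ℂ) :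
    (A × ι) × (B × C) → ℂ :=
  fun x => ∑ j, V x.1.2 x.2.2 j * φ (x.1.1, (x.2.1, j))

lemma ptraceL_proj_stinespringVec [Fintype ι] [Fintype A] [Fintype B] [DecidableEq B]
    [Fintype N] (V : ι → Matrix C N ℂ) (φ : A × (B × N) → ℂ) :
    ptraceL (proj (stinespringVec V φ)) = krausApply V (ptraceL (proj φ)) := by
  ext ⟨b, c⟩ ⟨b', c'⟩
  rw [krausApply_apply]
  simp only [ptraceL, proj, stinespringVec, Matrix.of_apply, Fintype.sum_prod_type, map_sum,
    map_mul, Finset.sum_mul_sum]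
  simp only [Finset.mul_sum]
  conv_lhs => rw [Finset.sum_comm]
  refine Finset.sum_congr rfl fun i _ => ?_
  conv_lhs => rw [Finset.sum_comm]
  refine Finset.sum_congr rfl fun j _ => ?_
  conv_lhs => rw [Finset.sum_comm]
  exact Finset.sum_congr rfl fun j' _ => Finset.sum_congr rfl fun a _ => by ring

lemma sum_stinespringVec_mul_conj [Fintype ι] [Fintype C] [Fintype N] [DecidableEq N]
    {V : ι → Matrix C N ℂ} (hV : ∑ i, (V i)ᴴ * V i = 1) (φ : A × (B × N) → ℂ)
    (a a' : A) (b b' : B) :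
    ∑ i, ∑ c, stinespringVec V φ ((a, i), (b, c)) * conj (stinespringVec V φ ((a', i), (b', c))) =
      ∑ j, φ (a, (b, j)) * conj (φ (a', (b', j))) := by
  calc _ = ∑ j, ∑ j', (∑ i, ∑ c, V i c j * conj (V i c j')) *
        (φ (a, (b, j)) * conj (φ (a', (b', j')))) := by
        simp only [stinespringVec, map_sum, map_mul, Finset.sum_mul, Finset.mul_sum]
        simp_rw [Finset.sum_comm (γ := C) (α := N), Finset.sum_comm (γ := ι) (α := N)]
        rw [Finset.sum_comm]
        ac_rfl
    _ = _ := by simp [sum_mul_conj_of_kraus hV]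

end Kraus

section Purification

variable {A B : Type*} [Fintype A] [Fintype B] {dA' dB' : ℕ} {ρ : Matrix (A × B) (A × B) ℂ}
  {ψ : (A × Fin dA') × (B × Fin dB') → ℂ}

lemma isPurification_of_trace_eq_one (htr : ρ.trace = 1)
    (hρ : ∀ a b a' b', ρ (a, b) (a', b') =
      ∑ a2, ∑ b2, ψ ((a, a2), (b, b2)) * conj (ψ ((a', a2), (b', b2)))) :
    IsPurification ρ ψ := by
  refine ⟨?_, hρ⟩
  have h : ((∑ x, ‖ψ x‖ ^ 2 : ℝ) : ℂ) = ρ.trace := by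
    simp only [Matrix.trace, Matrix.diag, Fintype.sum_prod_type, hρ]
    push_cast
    simp only [Complex.mul_conj']
    exact Finset.sum_congr rfl fun a _ => Finset.sum_comm
  exact_mod_cast h.trans htr

lemma IsPurification.nonempty_right (h : IsPurification ρ ψ) : Nonempty (Fin dB') := by
  by_contra hC
  rw [not_nonempty_iff] at hC
  simpa using h.1

end Purification

section StandardPurification

variable {A B N : Type*}

/-- The paper's `ψ_s`, with its one-dimensional `A'` factor dropped. -/
def stdPurification (lam : N → ℝ) (v : N → A × B → ℂ) : A × (B × N) → ℂ :=
  fun x => ((Real.sqrt (lam x.2.2) : ℝ) : ℂ) * v x.2.2 (x.1, x.2.1)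

lemma ptraceL_proj_stdPurification [Fintype A] (lam : N → ℝ) (v : N → A × B → ℂ) :
    ptraceL (proj (fun x : (A × Fin 1) × (B × N) =>
      ((Real.sqrt (lam x.2.2) : ℝ) : ℂ) * v x.2.2 (x.1.1, x.2.1))) =
      ptraceL (proj (stdPurification lam v)) := by
  ext p q
  simp [ptraceL, proj, stdPurification, Fintype.sum_prod_type]

lemma sum_stdPurification_mul_conj [Fintype N] {lam : N → ℝ} (hlam : ∀ j, 0 ≤ lam j)
    (v : N → A × B → ℂ) (a a' : A) (b b' : B) :
    ∑ j, stdPurification lam v (a, (b, j)) * conj (stdPurification lam v (a', (b', j))) =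
      (∑ j, (lam j : ℂ) • proj (v j)) (a, b) (a', b') := by
  simp only [stdPurification, Matrix.sum_apply, Matrix.smul_apply, proj, Matrix.of_apply,
    smul_eq_mul, map_mul, Complex.conj_ofReal]
  refine Finset.sum_congr rfl fun j _ => ?_
  have h : ((Real.sqrt (lam j) : ℝ) : ℂ) * ((Real.sqrt (lam j) : ℝ) : ℂ) = lam j := by
    exact_mod_cast Real.mul_self_sqrt (hlam j)
  linear_combination (v j (a, b) * conj (v j (a', b'))) * h

end StandardPurification

section Spectral

variable {X N : Type*} [Fintype X] {v : N → X → ℂ}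

lemma sum_mul_conj_of_orthonormal [Fintype N] [DecidableEq N] [DecidableEq X]
    (hcard : Fintype.card N = Fintype.card X)
    (hon : ∀ i j, ∑ x, conj (v i x) * v j x = if i = j then 1 else 0) (x y : X) :
    ∑ j, v j x * conj (v j y) = if x = y then 1 else 0 := by
  let M : Matrix N X ℂ := Matrix.of fun j x => conj (v j x)
  have hM : M * Mᴴ = 1 := by
    ext i j
    simpa [M, Matrix.mul_apply, Matrix.one_apply] using hon i j
  have h := congrFun (congrFun ((Matrix.mul_eq_one_comm_of_card_eq _ _ _ hcard).1 hM) x) y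
  simpa [M, Matrix.mul_apply, Matrix.one_apply] using h

lemma proj_mulVec (ψ φ : X → ℂ) : proj ψ *ᵥ φ = (∑ x, conj (ψ x) * φ x) • ψ := by
  ext x
  simp only [Matrix.mulVec, dotProduct, proj, Matrix.of_apply, Pi.smul_apply, smul_eq_mul,
    Finset.sum_mul]
  exact Finset.sum_congr rfl fun y _ => by ring

lemma sum_smul_proj_mulVec [Fintype N] [DecidableEq N] (lam : N → ℝ)
    (hon : ∀ i j, ∑ x, conj (v i x) * v j x = if i = j then 1 else 0) (j : N) :
    (∑ i, (lam i : ℂ) • proj (v i)) *ᵥ v j = (lam j : ℂ) • v j := by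
  simp [Matrix.sum_mulVec, Matrix.smul_mulVec, proj_mulVec, hon]

end Spectral

lemma eq_zero_of_sum_conj_mul_nonpos {E C : Type*} [Fintype E] [Fintype C] {f : E → C → ℂ}
    {r : ℝ} (hf : ∑ e, ∑ c, conj (f e c) * f e c = r) (hr : r ≤ 0) (e : E) (c : C) :
    f e c = 0 := by
  have hsum : ∑ p : E × C, Complex.normSq (f p.1 p.2) = r := by
    simp only [Fintype.sum_prod_type]
    have hc : ((∑ e, ∑ c, Complex.normSq (f e c) : ℝ) : ℂ) = r := by
      push_cast
      simpa only [Complex.normSq_eq_conj_mul_self] using hf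
    exact_mod_cast hc
  have hzero := (Fintype.sum_eq_zero_iff_of_nonneg fun p => Complex.normSq_nonneg _).1
    (le_antisymm (hsum.trans_le hr) (Finset.sum_nonneg fun p _ => Complex.normSq_nonneg _))
  exact Complex.normSq_eq_zero.1 (congrFun hzero (e, c))

section PartialInner

variable {A B A' C N : Type*} [Fintype A] [Fintype B]

def partialInner (v : N → A × B → ℂ) (ψ : (A × A') × (B × C) → ℂ) (j : N) (e : A') (c : C) :
    ℂ :=
  ∑ x, conj (v j x) * ψ ((x.1, e), (x.2, c))

lemma sum_mul_partialInner [Fintype N] [DecidableEq A] [DecidableEq B] {v : N → A × B → ℂ}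
    (hv : ∀ x y, ∑ j, v j x * conj (v j y) = if x = y then 1 else 0)
    (ψ : (A × A') × (B × C) → ℂ) (a : A) (b : B) (e : A') (c : C) :
    ∑ j, v j (a, b) * partialInner v ψ j e c = ψ ((a, e), (b, c)) := by
  simp only [partialInner, Finset.mul_sum, ← mul_assoc]
  rw [Finset.sum_comm]
  simp [← Finset.sum_mul, hv]

lemma sum_conj_partialInner_mul [Fintype A'] [Fintype C] [Fintype N] [DecidableEq N]
    {v : N → A × B → ℂ} {lam : N → ℝ}
    (hon : ∀ i j, ∑ x, conj (v i x) * v j x = if i = j then 1 else 0)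
    {ψ : (A × A') × (B × C) → ℂ}
    (hψ : ∀ a b a' b', (∑ i, (lam i : ℂ) • proj (v i)) (a, b) (a', b') =
      ∑ e, ∑ c, ψ ((a, e), (b, c)) * conj (ψ ((a', e), (b', c))))
    (j j' : N) :
    ∑ e, ∑ c, conj (partialInner v ψ j e c) * partialInner v ψ j' e c =
      if j = j' then (lam j : ℂ) else 0 := by
  set ρ := ∑ i, (lam i : ℂ) • proj (v i) with hρ
  calc _ = ∑ y, ∑ x, conj (v j' y) * v j x *
        ∑ e, ∑ c, ψ ((y.1, e), (y.2, c)) * conj (ψ ((x.1, e), (x.2, c))) := by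
        simp only [partialInner, map_sum, map_mul, Complex.conj_conj, Finset.sum_mul,
          Finset.mul_sum]
        simp_rw [Finset.sum_comm (γ := C) (α := A × B), Finset.sum_comm (γ := A') (α := A × B)]
        ac_rfl
    _ = ∑ y, conj (v j' y) * (ρ *ᵥ v j) y := by
        simp only [← hψ, Matrix.mulVec, dotProduct, Finset.mul_sum]
        ac_rfl
    _ = _ := by
        simp only [hρ, sum_smul_proj_mulVec lam hon, Pi.smul_apply, smul_eq_mul,
          mul_left_comm _ ((lam j : ℝ) : ℂ), ← Finset.mul_sum, hon]
        rw [mul_ite, mul_one, mul_zero]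
        exact if_congr eq_comm rfl rfl

end PartialInner

section CompletedKraus

variable {A B A' C N : Type*} {lam : N → ℝ} {v : N → A × B → ℂ} {ψ : (A × A') × (B × C) → ℂ}

/-- Where `lam j ≤ 0` the column `j` vanishes (`x / 0 = 0`); `kernelKraus` covers those columns. -/
def purificationKraus [Fintype A] [Fintype B] (lam : N → ℝ) (v : N → A × B → ℂ)
    (ψ : (A × A') × (B × C) → ℂ) (e : A') : Matrix C N ℂ :=
  Matrix.of fun c j => partialInner v ψ j e c / ((Real.sqrt (lam j) : ℝ) : ℂ)

lemma stinespringVec_purificationKraus [Fintype A] [Fintype B] [Fintype N] [DecidableEq A]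
    [DecidableEq B]
    (hv : ∀ x y, ∑ j, v j x * conj (v j y) = if x = y then 1 else 0)
    (hzero : ∀ j, lam j ≤ 0 → ∀ e c, partialInner v ψ j e c = 0) :
    stinespringVec (purificationKraus lam v ψ) (stdPurification lam v) = ψ := by
  funext ⟨⟨a, e⟩, ⟨b, c⟩⟩
  rw [← sum_mul_partialInner hv ψ a b e c]
  refine Finset.sum_congr rfl fun j _ => ?_
  simp only [purificationKraus, stdPurification, Matrix.of_apply]
  by_cases hj : lam j ≤ 0
  · simp [hzero j hj]
  · have : ((Real.sqrt (lam j) : ℝ) : ℂ) ≠ 0 := by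
      exact_mod_cast (Real.sqrt_pos.2 (not_le.1 hj)).ne'
    field_simp

lemma sum_purificationKraus_conjTranspose_mul [Fintype A] [Fintype B] [Fintype A'] [Fintype C]
    [DecidableEq N]
    (hgram : ∀ j j', ∑ e, ∑ c, conj (partialInner v ψ j e c) * partialInner v ψ j' e c =
      if j = j' then (lam j : ℂ) else 0) :
    ∑ e, (purificationKraus lam v ψ e)ᴴ * purificationKraus lam v ψ e =
      Matrix.diagonal fun j => if 0 < lam j then 1 else 0 := by
  ext j j'
  calc _ = (∑ e, ∑ c, conj (partialInner v ψ j e c) * partialInner v ψ j' e c) /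
        (((Real.sqrt (lam j) : ℝ) : ℂ) * ((Real.sqrt (lam j') : ℝ) : ℂ)) := by
        simp only [Matrix.sum_apply, Matrix.mul_apply, Matrix.conjTranspose_apply,
          purificationKraus, Matrix.of_apply, Finset.sum_div, Complex.star_def, map_div₀,
          Complex.conj_ofReal]
        exact Finset.sum_congr rfl fun e _ => Finset.sum_congr rfl fun c _ => by ring
    _ = _ := by
        rw [hgram, Matrix.diagonal_apply]
        split_ifs with h hj
        · subst h
          have : ((Real.sqrt (lam j) : ℝ) : ℂ) * ((Real.sqrt (lam j) : ℝ) : ℂ) = lam j := by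
            exact_mod_cast Real.mul_self_sqrt hj.le
          rw [this, div_self (by exact_mod_cast hj.ne')]
        · simp [Real.sqrt_eq_zero'.2 (not_lt.1 hj)]
        · simp

def kernelKraus [DecidableEq C] [DecidableEq N] (lam : N → ℝ) (c₀ : C) (j : N) :
    Matrix C N ℂ :=
  if 0 < lam j then 0 else Matrix.single c₀ j 1

lemma sum_kernelKraus_conjTranspose_mul [Fintype C] [Fintype N] [DecidableEq C] [DecidableEq N]
    (c₀ : C) :
    ∑ j, (kernelKraus lam c₀ j)ᴴ * kernelKraus lam c₀ j =
      Matrix.diagonal fun j => if 0 < lam j then 0 else 1 := by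
  rw [← Matrix.sum_single_eq_diagonal]
  refine Finset.sum_congr rfl fun j _ => ?_
  unfold kernelKraus
  split_ifs <;> simp [Matrix.conjTranspose_single, Matrix.single_mul_single_same]

lemma stinespringVec_kernelKraus [Fintype N] [DecidableEq C] [DecidableEq N] (c₀ : C) :
    stinespringVec (A := A) (B := B) (kernelKraus lam c₀) (stdPurification lam v) = 0 := by
  funext ⟨⟨a, j₀⟩, ⟨b, c⟩⟩
  refine Finset.sum_eq_zero fun j _ => ?_
  unfold kernelKraus
  split_ifs with hj₀
  · simp
  · by_cases hj : j = j₀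
    · simp [hj, stdPurification, Real.sqrt_eq_zero'.2 (not_lt.1 hj₀)]
    · simp [Ne.symm hj]

lemma exists_kraus_of_purification [Fintype A] [Fintype B] [Fintype A'] [Fintype C] [Fintype N]
    [DecidableEq A] [DecidableEq B] [DecidableEq C] [DecidableEq N]
    (hon : ∀ i j, ∑ x, conj (v i x) * v j x = if i = j then 1 else 0)
    (hv : ∀ x y, ∑ j, v j x * conj (v j y) = if x = y then 1 else 0)
    (hψ : ∀ a b a' b', (∑ i, (lam i : ℂ) • proj (v i)) (a, b) (a', b') =
      ∑ e, ∑ c, ψ ((a, e), (b, c)) * conj (ψ ((a', e), (b', c))))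
    (c₀ : C) :
    ∃ V : A' ⊕ N → Matrix C N ℂ, ∑ i, (V i)ᴴ * V i = 1 ∧
      krausApply V (ptraceL (proj (stdPurification lam v))) = ptraceL (proj ψ) := by
  have hgram := sum_conj_partialInner_mul hon hψ
  have hzero : ∀ j, lam j ≤ 0 → ∀ e c, partialInner v ψ j e c = 0 := fun j hj =>
    eq_zero_of_sum_conj_mul_nonpos (by simpa using hgram j j) hj
  refine ⟨Sum.elim (purificationKraus lam v ψ) (kernelKraus lam c₀), ?_, ?_⟩
  · rw [Fintype.sum_sum_type]
    simp only [Sum.elim_inl, Sum.elim_inr, sum_purificationKraus_conjTranspose_mul hgram,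
      sum_kernelKraus_conjTranspose_mul, Matrix.diagonal_add]
    rw [← Matrix.diagonal_one]
    congr 1
    funext j
    split_ifs <;> norm_num
  · rw [krausApply_sum_elim, ← ptraceL_proj_stinespringVec, ← ptraceL_proj_stinespringVec,
      stinespringVec_purificationKraus hv hzero, stinespringVec_kernelKraus]
    ext
    simp [ptraceL, proj]

end CompletedKraus

/-- channel reformulation of the entanglement of purification. With the
standard purification ψ_s = Σᵢ √λᵢ |ψᵢ⟩_{AB}|0⟩_{A'}|i⟩_{B'} of ρ = Σᵢ λᵢ|ψᵢ⟩⟨ψᵢ| and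
μ_{BB'}(ρ) = Tr_{AA'}|ψ_s⟩⟨ψ_s|, one has
E_p(ρ) = inf over TCP maps Λ_{B'} of S((I_B ⊗ Λ_{B'})(μ_{BB'}(ρ))). -/
theorem stmt3 {dA dB : ℕ}
    (ρ : Matrix (Fin dA × Fin dB) (Fin dA × Fin dB) ℂ) (hρ : IsDensity ρ)
    (lam : Fin (dA * dB) → ℝ) (v : Fin (dA * dB) → Fin dA × Fin dB → ℂ)
    (hlam : ∀ i, 0 ≤ lam i)
    (hon : ∀ i j, ∑ x, (starRingEnd ℂ) (v i x) * v j x = if i = j then 1 else 0)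
    (hdecomp : ρ = ∑ i, (lam i : ℂ) • proj (v i)) :
    Ep ρ = sInf { e : ℝ |
      ∃ (d2 m : ℕ) (V : Fin m → Matrix (Fin d2) (Fin (dA * dB)) ℂ),
        (∑ i, (V i)ᴴ * V i = 1) ∧
        e = vN (∑ i, ((1 : Matrix (Fin dB) (Fin dB) ℂ) ⊗ₖ V i) *
              ptraceL (proj (fun x : (Fin dA × Fin 1) × (Fin dB × Fin (dA * dB)) =>
                ((Real.sqrt (lam x.2.2) : ℝ) : ℂ) * v x.2.2 (x.1.1, x.2.1))) *
              ((1 : Matrix (Fin dB) (Fin dB) ℂ) ⊗ₖ V i)ᴴ) } := by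
  subst hdecomp
  have hv := sum_mul_conj_of_orthonormal (by simp) hon
  rw [Ep, ptraceL_proj_stdPurification]
  congr 1
  ext E
  constructor
  · rintro ⟨dA', dB', ψ, hψ, rfl⟩
    obtain ⟨c₀⟩ := hψ.nonempty_right
    obtain ⟨V, hV, hout⟩ := exists_kraus_of_purification hon hv hψ.2 c₀
    refine ⟨dB', dA' + dA * dB, V ∘ finSumFinEquiv.symm, ?_, ?_⟩
    · exact (finSumFinEquiv.symm.sum_comp fun i => (V i)ᴴ * V i).trans hV
    · exact congrArg vN ((krausApply_comp_equiv _ V _).trans hout).symm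
  · rintro ⟨d2, m, V, hV, rfl⟩
    refine ⟨m, d2, stinespringVec V (stdPurification lam v),
      isPurification_of_trace_eq_one hρ.2 fun a b a' b' => ?_, ?_⟩
    · rw [sum_stinespringVec_mul_conj hV, sum_stdPurification_mul_conj hlam v]
    · rw [ent, ptraceL_proj_stinespringVec, krausApply]

end QIT
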